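/- arXiv:2110.03412 — 2 statements merged into one kernel-verified Lean document; each statement's English description precedes it below -/
import Mathlib

section
/- Let A be a symmetric 3×3 real matrix with eigenvalues λ₁, λ₂, λ₃ and trace R = λ₁+λ₂+λ₃ > 0 (the Ricci eigenvalues of a 3-manifold with positive scalar curvature). For any symmetric 3×3 matrix h written in the eigenbasis of A, define Rm(h,h) := Rm_{ikjl} h_{ij} h_{kl}, where Rm is given by the dimension-3 identity Rm_{ikjl} = Ric_{ij}g_{kl} + Ric_{kl}g_{ij} − Ric_{il}g_{kj} − Ric_{kj}g_{il} − (R/2)(g_{ij}g_{kl} − g_{il}g_{kj}). Then the Anderson–Chow inequality holds: R · Rm(h,h) ≤ |A|² · |h|², where |A|² = λ₁²+λ₂²+λ₃² and |h|² = Σ_{i,j} h_{ij}². -/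
theorem key (a0 a1 a2 x0 x1 x2 u v w : ℝ) :
    (a0+a1+a2) * (2*(a0*x0+a1*x1+a2*x2)*(x0+x1+x2)
      - 2*(a0*(x0^2+u^2+v^2)+a1*(u^2+x1^2+w^2)+a2*(v^2+w^2+x2^2))
      - ((a0+a1+a2)/2)*((x0+x1+x2)^2 - (x0^2+x1^2+x2^2+2*u^2+2*v^2+2*w^2)))
    ≤ (a0^2+a1^2+a2^2)*(x0^2+x1^2+x2^2+2*u^2+2*v^2+2*w^2) := by
  rw [← sub_nonneg]
  have h : (a0^2+a1^2+a2^2)*(x0^2+x1^2+x2^2+2*u^2+2*v^2+2*w^2)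
      - (a0+a1+a2) * (2*(a0*x0+a1*x1+a2*x2)*(x0+x1+x2)
      - 2*(a0*(x0^2+u^2+v^2)+a1*(u^2+x1^2+w^2)+a2*(v^2+w^2+x2^2))
      - ((a0+a1+a2)/2)*((x0+x1+x2)^2 - (x0^2+x1^2+x2^2+2*u^2+2*v^2+2*w^2)))
    = (2*a0*x0 - a0*x1 - a0*x2 - a1*x1 + a1*x2 + a2*x1 - a2*x2)^2/4
      + (3*a0*x1 + a0*x2 - 2*a1*x0 - a1*x1 - a1*x2 - 2*a2*x0 + a2*x1 + a2*x2)^2/12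
      + (2*a0*x2 - a1*x0 + a1*x1 + a1*x2 - a2*x0 - a2*x1 - a2*x2)^2/6
      + (a1*x0 - a1*x1 + a1*x2 - a2*x0 - a2*x1 + a2*x2)^2/2
      + u^2*(2*a0^2+2*a1^2+a2^2+(a0+a1)^2)
      + v^2*(2*a0^2+a1^2+2*a2^2+(a0+a2)^2)
      + w^2*(a0^2+2*a1^2+2*a2^2+(a1+a2)^2) := by ring
  rw [h]
  positivity

open Finset in
/-- Anderson–Chow inequality (algebraic form, dimension 3): for a symmetric 3×3 matrix `A`
(the Ricci tensor in an orthonormal eigenframe) with positive trace `R`, and any symmetric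
3×3 matrix `h`, with `Rm_{ikjl} = A_{ij}δ_{kl} + A_{kl}δ_{ij} − A_{il}δ_{kj} − A_{kj}δ_{il}
− (R/2)(δ_{ij}δ_{kl} − δ_{il}δ_{kj})`, one has `R · Rm_{ikjl}h_{ij}h_{kl} ≤ |A|²|h|²`. -/
theorem anderson_chow
    (A h : Matrix (Fin 3) (Fin 3) ℝ)
    (hA : A.IsSymm) (hh : h.IsSymm)
    (R : ℝ) (hR : R = A.trace) (hRpos : 0 < R)
    (δ : Fin 3 → Fin 3 → ℝ) (hδ : ∀ i j, δ i j = if i = j then 1 else 0)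
    (Rm : Fin 3 → Fin 3 → Fin 3 → Fin 3 → ℝ)
    (hRm : ∀ i k j l, Rm i k j l =
      A i j * δ k l + A k l * δ i j - A i l * δ k j - A k j * δ i l
        - (R / 2) * (δ i j * δ k l - δ i l * δ k j)) :
    R * (∑ i, ∑ j, ∑ k, ∑ l, Rm i k j l * h i j * h k l) ≤
      (∑ i, ∑ j, (A i j) ^ 2) * (∑ i, ∑ j, (h i j) ^ 2) := by
  -- entry symmetry facts
  have hsymm : ∀ i j, h j i = h i j := hh.apply
  have asymm : ∀ i j, A j i = A i j := hA.apply
  -- delta values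
  have δ00 : δ 0 0 = 1 := by simp [hδ]
  have δ11 : δ 1 1 = 1 := by simp [hδ]
  have δ22 : δ 2 2 = 1 := by simp [hδ]
  have δ01 : δ 0 1 = 0 := by simp [hδ]
  have δ02 : δ 0 2 = 0 := by simp [hδ]
  have δ10 : δ 1 0 = 0 := by simp [hδ]
  have δ12 : δ 1 2 = 0 := by simp [hδ]
  have δ20 : δ 2 0 = 0 := by simp [hδ]
  have δ21 : δ 2 1 = 0 := by simp [hδ]
  -- Step 1: quadruple sum in trace form
  have hsum : (∑ i, ∑ j, ∑ k, ∑ l, Rm i k j l * h i j * h k l)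
      = 2 * (A*h).trace * h.trace - 2*(A*h*h).trace - R/2*(h.trace^2 - (h*h).trace) := by
    simp only [hRm, Fin.sum_univ_three, Matrix.trace_fin_three, Matrix.mul_apply,
      δ00, δ11, δ22, δ01, δ02, δ10, δ12, δ20, δ21,
      hsymm 0 1, hsymm 0 2, hsymm 1 2, asymm 0 1, asymm 0 2, asymm 1 2]
    ring

  -- Step 2: RHS sums as traces
  have hAsq : (∑ i, ∑ j, (A i j) ^ 2) = (A*A).trace := by
    simp only [Fin.sum_univ_three, Matrix.trace_fin_three, Matrix.mul_apply,
      asymm 0 1, asymm 0 2, asymm 1 2]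
    ring
  have hhsq : (∑ i, ∑ j, (h i j) ^ 2) = (h*h).trace := by
    simp only [Fin.sum_univ_three, Matrix.trace_fin_three, Matrix.mul_apply,
      hsymm 0 1, hsymm 0 2, hsymm 1 2]
    ring
  -- Step 3: spectral theorem
  have hH : A.IsHermitian := hA
  set V : Matrix (Fin 3) (Fin 3) ℝ := (hH.eigenvectorUnitary : Matrix (Fin 3) (Fin 3) ℝ) with hV
  set lam : Fin 3 → ℝ := hH.eigenvalues with hlam
  set D : Matrix (Fin 3) (Fin 3) ℝ := Matrix.diagonal lam with hDdef
  have hspec : A = V * D * star V := by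
    have := hH.spectral_theorem
    have h4 : Matrix.diagonal (RCLike.ofReal ∘ hH.eigenvalues) = D := by
      rw [hDdef, hlam]; norm_num [Function.comp]
    rwa [h4] at this
  set W : Matrix (Fin 3) (Fin 3) ℝ := star V with hW
  have h1 : W * V = 1 := Unitary.star_mul_self_of_mem hH.eigenvectorUnitary.2
  have h2 : V * W = 1 := Unitary.mul_star_self_of_mem hH.eigenvectorUnitary.2
  have cancelVW : ∀ X : Matrix (Fin 3) (Fin 3) ℝ, V * (W * X) = X := fun X => by
    rw [← Matrix.mul_assoc, h2, Matrix.one_mul]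
  have cancelWV : ∀ X : Matrix (Fin 3) (Fin 3) ℝ, W * (V * X) = X := fun X => by
    rw [← Matrix.mul_assoc, h1, Matrix.one_mul]
  set y : Matrix (Fin 3) (Fin 3) ℝ := W * h * V with hy
  have conjtrace : ∀ M : Matrix (Fin 3) (Fin 3) ℝ, (W * M * V).trace = M.trace := by
    intro M
    rw [Matrix.trace_mul_cycle, h2, Matrix.one_mul]
  have hD : D = W * A * V := by
    rw [hspec]
    simp only [Matrix.mul_assoc, cancelVW, cancelWV, h1, h2, Matrix.mul_one, Matrix.one_mul]
  have hyy : y * y = W * (h*h) * V := by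
    rw [hy]; simp only [Matrix.mul_assoc, cancelVW]
  have hDy : D * y = W * (A*h) * V := by
    rw [hD, hy]; simp only [Matrix.mul_assoc, cancelVW]
  have hDyy : D * y * y = W * (A*h*h) * V := by
    rw [hD, hy]; simp only [Matrix.mul_assoc, cancelVW]
  have hDD : D * D = W * (A*A) * V := by
    rw [hD]; simp only [Matrix.mul_assoc, cancelVW]
  have ty : y.trace = h.trace := by rw [hy, conjtrace]
  have tyy : (y*y).trace = (h*h).trace := by rw [hyy, conjtrace]
  have tDy : (D*y).trace = (A*h).trace := by rw [hDy, conjtrace]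
  have tDyy : (D*y*y).trace = (A*h*h).trace := by rw [hDyy, conjtrace]
  have tDD : (D*D).trace = (A*A).trace := by rw [hDD, conjtrace]
  have tD : D.trace = A.trace := by
    rw [hD, conjtrace]
  -- y is symmetric
  have hWT : W = V.transpose := by
    rw [hW]; ext i j
    simp [Matrix.star_eq_conjTranspose, Matrix.conjTranspose_apply, Matrix.transpose_apply]
  have hsy : y.transpose = y := by
    simp only [hy, hWT, Matrix.transpose_mul, Matrix.transpose_transpose, hh.eq,
      Matrix.mul_assoc]
  have hysymm : ∀ i j, y j i = y i j := Matrix.IsSymm.apply hsy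
  -- Step 4: reduce to scalar inequality
  rw [hsum, hAsq, hhsq, ← tyy, ← ty, ← tDy, ← tDyy, ← tDD]
  have hRD : R = lam 0 + lam 1 + lam 2 := by
    rw [hR, ← tD, hDdef, Matrix.trace_fin_three]
    simp [Matrix.diagonal]
  -- expand traces into entries of y and lam
  have e1 : (D*y).trace = lam 0 * y 0 0 + lam 1 * y 1 1 + lam 2 * y 2 2 := by
    rw [hDdef]
    simp [Matrix.trace_fin_three, Matrix.mul_apply, Fin.sum_univ_three, Matrix.diagonal_apply]
  have e2 : y.trace = y 0 0 + y 1 1 + y 2 2 := Matrix.trace_fin_three y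
  have e3 : (D*y*y).trace = lam 0 * (y 0 0^2 + y 0 1^2 + y 0 2^2)
      + lam 1 * (y 0 1^2 + y 1 1^2 + y 1 2^2) + lam 2 * (y 0 2^2 + y 1 2^2 + y 2 2^2) := by
    rw [hDdef]
    simp [Matrix.trace_fin_three, Matrix.mul_apply, Fin.sum_univ_three,
      Matrix.diagonal_apply, hysymm 0 1, hysymm 0 2, hysymm 1 2]
    try ring
  have e4 : (y*y).trace = y 0 0^2 + y 1 1^2 + y 2 2^2 + 2*y 0 1^2 + 2*y 0 2^2 + 2*y 1 2^2 := by
    simp only [Matrix.trace_fin_three, Matrix.mul_apply, Fin.sum_univ_three,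
      hysymm 0 1, hysymm 0 2, hysymm 1 2]
    ring
  have e5 : (D*D).trace = lam 0^2 + lam 1^2 + lam 2^2 := by
    rw [hDdef]
    simp [Matrix.trace_fin_three, Matrix.mul_apply, Fin.sum_univ_three, Matrix.diagonal_apply]
    try ring
  rw [e1, e2, e3, e4, e5, hRD]
  have := key (lam 0) (lam 1) (lam 2) (y 0 0) (y 1 1) (y 2 2) (y 0 1) (y 0 2) (y 1 2)
  linarith [this]
end

section
/- Fix n ≥ 3. Let g be the identity n×n matrix, let A be a symmetric n×n matrix with trace R > 0, and define the curvature tensor of a locally conformally flat manifold (vanishing Weyl tensor) via the Kulkarni–Nomizu product of the Schouten tensor with the metric: Rm_{ikjl} = (1/(n−2))(A_{ij}g_{kl} + A_{kl}g_{ij} − A_{il}g_{kj} − A_{kj}g_{il}) − (R/((n−1)(n−2)))(g_{ij}g_{kl} − g_{il}g_{kj}). Then for every symmetric n×n matrix h, R · Rm_{ikjl}h_{ij}h_{kl} ≤ |A|²|h|², where |A|² = Σ A_{ij}² and |h|² = Σ h_{ij}². -/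
/-!
Diagonalise `h` by an orthogonal matrix `U` and replace `A` by `Uᵀ A U`; all the traces in the
contracted curvature term and both Frobenius norms are unchanged, so one may assume
`h = diag d`. Then only the diagonal `a` of `A` enters the left-hand side, and the claim becomes
a scalar inequality in `a, d ∈ ℝⁿ`. Centring `d` and expanding, it reduces to two AM–GM
estimates; the sharp one rests on the bound `n (n - 1) ∑ x⁴ ≤ (n² - 3n + 3) (∑ x²)²` for
`∑ x = 0`, which is proved by a sum-of-squares certificate.
-/

open Finset Matrix Unitary

section Scalar

variable {ι : Type*} [Fintype ι]

lemma sum_sub_sum_div_card_eq_zero (hι : (Fintype.card ι : ℝ) ≠ 0) (y : ι → ℝ) :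
    ∑ i, (y i - (∑ j, y j) / Fintype.card ι) = 0 := by
  simp [Finset.sum_sub_distrib, Finset.card_univ, mul_div_cancel₀ _ hι]

lemma sum_sq_diag_le_sum_sum_sq (f : ι → ι → ℝ) : ∑ i, f i i ^ 2 ≤ ∑ i, ∑ j, f i j ^ 2 :=
  Finset.sum_le_sum fun i _ => Finset.single_le_sum (fun _ _ => sq_nonneg _) (Finset.mem_univ i)

lemma sum_quartic_of_sum_eq_zero {x : ι → ℝ} (hx : ∑ i, x i = 0) (c₄ c₃ c₂ c₁ c₀ : ℝ) :
    ∑ i, (c₄ * x i ^ 4 + c₃ * x i ^ 3 + c₂ * x i ^ 2 + c₁ * x i + c₀) =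
      c₄ * ∑ i, x i ^ 4 + c₃ * ∑ i, x i ^ 3 + c₂ * ∑ i, x i ^ 2 + Fintype.card ι * c₀ := by
  simp [Finset.sum_add_distrib, ← Finset.mul_sum, Finset.card_univ, hx]

lemma sum_pow_four_le_of_sum_eq_zero (hι : 3 ≤ Fintype.card ι) {x : ι → ℝ}
    (hx : ∑ i, x i = 0) :
    (Fintype.card ι : ℝ) * (Fintype.card ι - 1) * ∑ i, x i ^ 4 ≤
      ((Fintype.card ι : ℝ) ^ 2 - 3 * Fintype.card ι + 3) * (∑ i, x i ^ 2) ^ 2 := by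
  have hN : (3 : ℝ) ≤ Fintype.card ι := by exact_mod_cast hι
  set N : ℝ := (Fintype.card ι : ℝ)
  set E := ∑ i, x i ^ 2
  set S₃ := ∑ i, x i ^ 3
  set S₄ := ∑ i, x i ^ 4
  -- certificate: `∑_{i ≠ j} q i j ^ 2 = (N - 1) (N - 2) ((N² - 3N + 3) E² - N (N - 1) S₄)`
  let q i j := (N - 1) * (N - 2) * x i * x j + (N - 1) * (x i ^ 2 + x j ^ 2) - E
  have hrow : ∀ i, ∑ j, q i j ^ 2 = (N - 1) ^ 2 * S₄ + 2 * (N - 1) ^ 2 * (N - 2) * x i * S₃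
      + ((N - 1) ^ 2 * (N - 2) ^ 2 * x i ^ 2 + 2 * (N - 1) * ((N - 1) * x i ^ 2 - E)) * E
      + N * ((N - 1) * x i ^ 2 - E) ^ 2 := fun i => by
    rw [← sum_quartic_of_sum_eq_zero hx _ _ _
      (2 * (N - 1) * (N - 2) * x i * ((N - 1) * x i ^ 2 - E))]
    exact Finset.sum_congr rfl fun j _ => by ring
  have hall : ∑ i, ∑ j, q i j ^ 2 = 2 * N * (N - 1) ^ 2 * S₄
      + ((N - 1) ^ 2 * (N - 2) ^ 2 + 2 - N ^ 2) * E ^ 2 :=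
    calc ∑ i, ∑ j, q i j ^ 2
        = ∑ i, (N * (N - 1) ^ 2 * x i ^ 4 + 0 * x i ^ 3
            + ((N - 1) ^ 2 * (N - 2) ^ 2 + 2 * (N - 1) ^ 2 - 2 * N * (N - 1)) * E * x i ^ 2
            + 2 * (N - 1) ^ 2 * (N - 2) * S₃ * x i
            + ((N - 1) ^ 2 * S₄ - 2 * (N - 1) * E ^ 2 + N * E ^ 2)) :=
          Finset.sum_congr rfl fun i _ => by rw [hrow]; ring
      _ = _ := by rw [sum_quartic_of_sum_eq_zero hx]; ring
  have hdiag : ∑ i, q i i ^ 2 = N ^ 2 * (N - 1) ^ 2 * S₄ - 2 * N * (N - 1) * E ^ 2 + N * E ^ 2 :=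
    calc ∑ i, q i i ^ 2
        = ∑ i, (N ^ 2 * (N - 1) ^ 2 * x i ^ 4 + 0 * x i ^ 3 + (-2 * N * (N - 1) * E) * x i ^ 2
            + 0 * x i + E ^ 2) :=
          Finset.sum_congr rfl fun i _ => by ring
      _ = _ := by rw [sum_quartic_of_sum_eq_zero hx]; ring
  have hle : ∑ i, q i i ^ 2 ≤ ∑ i, ∑ j, q i j ^ 2 := sum_sq_diag_le_sum_sum_sq q
  have hcert : (N - 1) * (N - 2) * ((N ^ 2 - 3 * N + 3) * E ^ 2 - N * (N - 1) * S₄) =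
      ∑ i, ∑ j, q i j ^ 2 - ∑ i, q i i ^ 2 := by
    rw [hall, hdiag]; ring
  have h2 : 0 < (N - 1) * (N - 2) := by nlinarith
  have := (mul_nonneg_iff_of_pos_left h2).mp (hcert ▸ sub_nonneg.mpr hle)
  linarith

lemma sum_sq_sub_sum_div_card (a : ι → ℝ) :
    ∑ i, (a i - (∑ j, a j) / Fintype.card ι) ^ 2 =
      ∑ i, a i ^ 2 - (∑ i, a i) ^ 2 / Fintype.card ι := by
  rcases (Fintype.card ι).eq_zero_or_pos with h0 | hpos
  · simp [Fintype.card_eq_zero_iff.mp h0]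
  · simp only [sub_sq, Finset.sum_add_distrib, Finset.sum_sub_distrib, ← Finset.sum_mul,
      ← Finset.mul_sum, Finset.sum_const, Finset.card_univ, nsmul_eq_mul]
    field_simp
    ring

lemma sq_sum_mul_le_of_sum_eq_zero (a : ι → ℝ) {x : ι → ℝ} (hx : ∑ i, x i = 0) :
    (∑ i, a i * x i) ^ 2 ≤ (∑ i, a i ^ 2 - (∑ i, a i) ^ 2 / Fintype.card ι) * ∑ i, x i ^ 2 := by
  have hshift : ∑ i, a i * x i = ∑ i, (a i - (∑ j, a j) / Fintype.card ι) * x i := by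
    simp [sub_mul, Finset.sum_sub_distrib, ← Finset.mul_sum, hx]
  rw [hshift, ← sum_sq_sub_sum_div_card]
  exact Finset.sum_mul_sq_le_sq_mul_sq univ _ _

lemma sq_sum_mul_sq_sub_le_of_sum_eq_zero (hι : 3 ≤ Fintype.card ι) (a : ι → ℝ) {x : ι → ℝ}
    (hx : ∑ i, x i = 0) :
    (Fintype.card ι : ℝ) * (Fintype.card ι - 1)
        * (∑ i, a i * (x i ^ 2 - (∑ j, x j ^ 2) / Fintype.card ι)) ^ 2 ≤
      ((Fintype.card ι : ℝ) - 2) ^ 2 * (∑ i, a i ^ 2 - (∑ i, a i) ^ 2 / Fintype.card ι)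
        * (∑ i, x i ^ 2) ^ 2 := by
  have hN : (3 : ℝ) ≤ Fintype.card ι := by exact_mod_cast hι
  have hN₀ : (Fintype.card ι : ℝ) ≠ 0 := by positivity
  have hσ : 0 ≤ ∑ i, a i ^ 2 - (∑ i, a i) ^ 2 / Fintype.card ι := by
    rw [← sum_sq_sub_sum_div_card]; positivity
  have hcs := sq_sum_mul_le_of_sum_eq_zero a
    (sum_sub_sum_div_card_eq_zero hN₀ fun i => x i ^ 2)
  have hvar : ∑ i, (x i ^ 2 - (∑ j, x j ^ 2) / Fintype.card ι) ^ 2 =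
      ∑ i, x i ^ 4 - (∑ i, x i ^ 2) ^ 2 / Fintype.card ι := by
    rw [sum_sq_sub_sum_div_card fun i => x i ^ 2]
    simp only [← pow_mul]
  rw [hvar] at hcs
  have h4 := sum_pow_four_le_of_sum_eq_zero hι hx
  set N : ℝ := (Fintype.card ι : ℝ)
  set σ := ∑ i, a i ^ 2 - (∑ i, a i) ^ 2 / N
  set E := ∑ i, x i ^ 2
  calc N * (N - 1) * (∑ i, a i * (x i ^ 2 - E / N)) ^ 2
      ≤ N * (N - 1) * (σ * (∑ i, x i ^ 4 - E ^ 2 / N)) :=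
        mul_le_mul_of_nonneg_left hcs (by nlinarith)
    _ = σ * (N * (N - 1) * ∑ i, x i ^ 4) - (N - 1) * σ * E ^ 2 := by field_simp
    _ ≤ σ * ((N ^ 2 - 3 * N + 3) * E ^ 2) - (N - 1) * σ * E ^ 2 := by gcongr
    _ = (N - 2) ^ 2 * σ * E ^ 2 := by ring

lemma chenWu_moments {N u H E σ p τ : ℝ} (hN : 3 ≤ N) (hσ : 0 ≤ σ) (hE : 0 ≤ E)
    (hp : p ^ 2 ≤ σ * E) (hτ : N * (N - 1) * τ ^ 2 ≤ (N - 2) ^ 2 * σ * E ^ 2) :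
    u * (2 * (1 / (N - 2))
          * ((p + u * H / N) * H - (τ + u * E / N + 2 * H * p / N + u * H ^ 2 / N ^ 2))
        - u / ((N - 1) * (N - 2)) * (H ^ 2 - (E + H ^ 2 / N))) ≤
      (σ + u ^ 2 / N) * (E + H ^ 2 / N) := by
  have hN₀ : 0 < N := by linarith
  have hN₁ : 0 < N - 1 := by linarith
  have hN₂ : 0 < N - 2 := by linarith
  have amgm₁ : 2 * (u * H * p) ≤ σ * H ^ 2 + u ^ 2 * E :=
    two_mul_le_add_of_sq_le_mul (by positivity) (by positivity) (by
      linear_combination mul_le_mul_of_nonneg_left hp (sq_nonneg (u * H)))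
  have amgm₂ : 2 * (-(N * (N - 1) * u * τ)) ≤
      N * (N - 1) * (N - 2) * σ * E + (N - 2) * u ^ 2 * E :=
    two_mul_le_add_of_sq_le_mul (by positivity) (by positivity) (by
      linear_combination mul_le_mul_of_nonneg_left hτ (by positivity : 0 ≤ N * (N - 1) * u ^ 2))
  calc _ = (σ + u ^ 2 / N) * (E + H ^ 2 / N)
        - ((σ * H ^ 2 + u ^ 2 * E - 2 * (u * H * p)) / N
          + (N * (N - 1) * (N - 2) * σ * E + (N - 2) * u ^ 2 * E - 2 * (-(N * (N - 1) * u * τ)))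
            / (N * (N - 1) * (N - 2))) := by
        field_simp
        ring
    _ ≤ _ := sub_le_self _ <| add_nonneg (div_nonneg (sub_nonneg.mpr amgm₁) (by positivity))
        (div_nonneg (sub_nonneg.mpr amgm₂) (by positivity))

lemma chenWu_diagonal (hι : 3 ≤ Fintype.card ι) (a d : ι → ℝ) :
    (∑ i, a i) * (2 * (1 / ((Fintype.card ι : ℝ) - 2))
        * ((∑ i, a i * d i) * (∑ i, d i) - ∑ i, a i * d i ^ 2)
      - (∑ i, a i) / (((Fintype.card ι : ℝ) - 1) * ((Fintype.card ι : ℝ) - 2))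
        * ((∑ i, d i) ^ 2 - ∑ i, d i ^ 2)) ≤
      (∑ i, a i ^ 2) * ∑ i, d i ^ 2 := by
  have hN : (3 : ℝ) ≤ Fintype.card ι := by exact_mod_cast hι
  have hN₀ : (Fintype.card ι : ℝ) ≠ 0 := by positivity
  have hx := sum_sub_sum_div_card_eq_zero hN₀ d
  have hσ : 0 ≤ ∑ i, a i ^ 2 - (∑ i, a i) ^ 2 / Fintype.card ι := by
    rw [← sum_sq_sub_sum_div_card]; positivity
  have hp := sq_sum_mul_le_of_sum_eq_zero a hx
  have hτ := sq_sum_mul_sq_sub_le_of_sum_eq_zero hι a hx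
  set N : ℝ := (Fintype.card ι : ℝ)
  set u := ∑ i, a i
  set H := ∑ i, d i
  set x : ι → ℝ := fun i => d i - H / N
  set E := ∑ i, x i ^ 2
  set p := ∑ i, a i * x i
  set τ := ∑ i, a i * (x i ^ 2 - E / N)
  have hP : ∑ i, a i * d i = p + u * H / N := by
    simp only [p, x, mul_sub, Finset.sum_sub_distrib, ← Finset.sum_mul, u]
    ring
  have hd2 : ∑ i, d i ^ 2 = E + H ^ 2 / N := by
    simp only [E, x, sub_sq, Finset.sum_add_distrib, Finset.sum_sub_distrib, ← Finset.sum_mul,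
      ← Finset.mul_sum, Finset.sum_const, Finset.card_univ, nsmul_eq_mul, H]
    field_simp
    ring
  have hT : ∑ i, a i * d i ^ 2 = τ + u * E / N + 2 * H * p / N + u * H ^ 2 / N ^ 2 := by
    have hτ' : τ = ∑ i, a i * d i ^ 2 - 2 * H / N * ∑ i, a i * d i
        + (H ^ 2 / N ^ 2 - E / N) * u := by
      simp only [τ, u, Finset.mul_sum, ← Finset.sum_sub_distrib, ← Finset.sum_add_distrib]
      exact Finset.sum_congr rfl fun i _ => by simp only [x]; ring
    rw [hτ', hP]
    field_simp
    ring
  rw [hP, hT, hd2, show ∑ i, a i ^ 2 = (∑ i, a i ^ 2 - u ^ 2 / N) + u ^ 2 / N by ring]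
  exact chenWu_moments hN hσ (Finset.sum_nonneg fun i _ => sq_nonneg _) hp hτ

end Scalar

section Matrices

variable {ι : Type*} [Fintype ι] [DecidableEq ι]

lemma Matrix.trace_conjStarAlgAut {R : Type*} [CommRing R] [StarRing R]
    (u : unitary (Matrix ι ι R)) (M : Matrix ι ι R) :
    (conjStarAlgAut R _ u M).trace = M.trace := by
  rw [conjStarAlgAut_apply, trace_mul_cycle, coe_star_mul_self, one_mul]

lemma Matrix.trace_transpose_mul_self {m n : Type*} [Fintype m] [Fintype n]
    (M : Matrix m n ℝ) :
    (Mᵀ * M).trace = ∑ i, ∑ j, M i j ^ 2 := by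
  simp only [trace, diag_apply, mul_apply, transpose_apply, sq]
  exact Finset.sum_comm

lemma Matrix.sum_sq_conjStarAlgAut (u : unitary (Matrix ι ι ℝ)) (M : Matrix ι ι ℝ) :
    ∑ i, ∑ j, conjStarAlgAut ℝ _ u M i j ^ 2 = ∑ i, ∑ j, M i j ^ 2 := by
  simp only [← trace_transpose_mul_self, ← conjTranspose_eq_transpose_of_trivial,
    ← star_eq_conjTranspose, ← map_star, ← map_mul, trace_conjStarAlgAut]

lemma Matrix.IsSymm.exists_conjStarAlgAut_eq_diagonal {h : Matrix ι ι ℝ} (hh : h.IsSymm) :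
    ∃ (u : unitary (Matrix ι ι ℝ)) (d : ι → ℝ), conjStarAlgAut ℝ _ u h = diagonal d := by
  have hH : h.IsHermitian := by
    rwa [IsHermitian, conjTranspose_eq_transpose_of_trivial]
  refine ⟨star hH.eigenvectorUnitary, hH.eigenvalues, ?_⟩
  simpa using hH.conjStarAlgAut_star_eigenvectorUnitary

def kulkarniNomizu (A B : Matrix ι ι ℝ) (i k j l : ι) : ℝ :=
  A i j * B k l + A k l * B i j - A i l * B k j - A k j * B i l

lemma sum_kulkarniNomizu_one_mul_mul (A h : Matrix ι ι ℝ) (hh : h.IsSymm) :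
    ∑ i, ∑ j, ∑ k, ∑ l, kulkarniNomizu A 1 i k j l * h i j * h k l =
      2 * ((A * h).trace * h.trace - (A * (h * h)).trace) := by
  have hs : ∀ i j, h j i = h i j := fun i j => hh.apply i j
  have hAh : (A * h).trace = ∑ i, ∑ j, A i j * h i j := by
    simp only [trace, diag_apply, mul_apply, hs]
  have hAhh : (A * (h * h)).trace = ∑ i, ∑ j, ∑ k, A i k * h i j * h j k := by
    simp only [trace, diag_apply, mul_apply, Finset.mul_sum]
    refine Finset.sum_congr rfl fun i _ => Finset.sum_comm.trans <|
      Finset.sum_congr rfl fun j _ => Finset.sum_congr rfl fun k _ => ?_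
    rw [hs j k, hs i j]; ring
  have hkl : ∑ i, ∑ j, ∑ k, A i j * h i j * h k k = (A * h).trace * h.trace := by
    rw [hAh]; simp only [trace, diag_apply, Finset.sum_mul]; simp only [Finset.mul_sum]
  have hij : ∑ i, ∑ j, ∑ k, A j k * h i i * h j k = h.trace * (A * h).trace := by
    rw [hAh]; simp only [trace, diag_apply, Finset.sum_mul]; simp only [Finset.mul_sum]
    ac_rfl
  have hil : ∑ i, ∑ j, ∑ k, A k j * h i j * h k i = (A * (h * h)).trace := by
    rw [hAhh, Finset.sum_comm_cycle]
    ac_rfl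
  simp only [kulkarniNomizu, one_apply, sub_mul, add_mul, Finset.sum_add_distrib,
    Finset.sum_sub_distrib, mul_ite, ite_mul, mul_one, mul_zero, zero_mul,
    Finset.sum_ite_irrel, Finset.sum_const_zero, Finset.sum_ite_eq, Finset.sum_ite_eq',
    Finset.mem_univ, if_true]
  rw [hkl, hij, ← hAhh, hil]
  ring

lemma sum_conformallyFlatCurvature_mul_mul (A h : Matrix ι ι ℝ) (hh : h.IsSymm) (c₁ c₂ : ℝ) :
    ∑ i, ∑ j, ∑ k, ∑ l,
        (c₁ * (A i j * (1 : Matrix ι ι ℝ) k l + A k l * (1 : Matrix ι ι ℝ) i j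
            - A i l * (1 : Matrix ι ι ℝ) k j - A k j * (1 : Matrix ι ι ℝ) i l)
          - c₂ * ((1 : Matrix ι ι ℝ) i j * (1 : Matrix ι ι ℝ) k l
            - (1 : Matrix ι ι ℝ) i l * (1 : Matrix ι ι ℝ) k j)) * h i j * h k l =
      2 * c₁ * ((A * h).trace * h.trace - (A * (h * h)).trace)
        - c₂ * (h.trace ^ 2 - (h * h).trace) := by
  have hA := sum_kulkarniNomizu_one_mul_mul A h hh
  have h1 := sum_kulkarniNomizu_one_mul_mul 1 h hh
  rw [one_mul, one_mul] at h1
  calc _ = c₁ * ∑ i, ∑ j, ∑ k, ∑ l, kulkarniNomizu A 1 i k j l * h i j * h k l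
        - c₂ / 2 * ∑ i, ∑ j, ∑ k, ∑ l, kulkarniNomizu 1 1 i k j l * h i j * h k l := by
        simp only [Finset.mul_sum, ← Finset.sum_sub_distrib]
        congr! 4 with i _ j _ k _ l _
        simp only [kulkarniNomizu]
        ring
    _ = _ := by rw [hA, h1]; ring

lemma chenWu_diagonal_matrix (hι : 3 ≤ Fintype.card ι) (B : Matrix ι ι ℝ) (d : ι → ℝ) :
    B.trace * (2 * (1 / ((Fintype.card ι : ℝ) - 2))
        * ((B * diagonal d).trace * (diagonal d).trace - (B * (diagonal d * diagonal d)).trace)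
      - B.trace / (((Fintype.card ι : ℝ) - 1) * ((Fintype.card ι : ℝ) - 2))
        * ((diagonal d).trace ^ 2 - (diagonal d * diagonal d).trace)) ≤
      (∑ i, ∑ j, B i j ^ 2) * ∑ i, ∑ j, diagonal d i j ^ 2 := by
  have hd : ∑ i, ∑ j, diagonal d i j ^ 2 = ∑ i, d i ^ 2 := by
    simp [diagonal_apply, ite_pow]
  rw [diagonal_mul_diagonal]
  simp only [trace, diag_apply, mul_diagonal, diagonal_apply_eq, hd, ← sq]
  calc _ ≤ (∑ i, B i i ^ 2) * ∑ i, d i ^ 2 := chenWu_diagonal hι (fun i => B i i) d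
    _ ≤ _ := mul_le_mul_of_nonneg_right (sum_sq_diag_le_sum_sum_sq B) (by positivity)

end Matrices

open Finset in
theorem chen_wu_general (n : ℕ) (hn : 3 ≤ n)
    (A h : Matrix (Fin n) (Fin n) ℝ)
    (hh : h.IsSymm)
    (R : ℝ) (hR : R = A.trace)
    (δ : Fin n → Fin n → ℝ) (hδ : ∀ i j, δ i j = if i = j then 1 else 0)
    (Rm : Fin n → Fin n → Fin n → Fin n → ℝ)
    (hRm : ∀ i k j l, Rm i k j l =
      (1 / ((n : ℝ) - 2)) *
        (A i j * δ k l + A k l * δ i j - A i l * δ k j - A k j * δ i l)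
      - (R / (((n : ℝ) - 1) * ((n : ℝ) - 2))) * (δ i j * δ k l - δ i l * δ k j)) :
    R * (∑ i, ∑ j, ∑ k, ∑ l, Rm i k j l * h i j * h k l) ≤
      (∑ i, ∑ j, (A i j) ^ 2) * (∑ i, ∑ j, (h i j) ^ 2) := by
  obtain rfl : δ = (1 : Matrix (Fin n) (Fin n) ℝ) := funext₂ fun i j => by rw [hδ, one_apply]
  simp only [hRm]
  rw [sum_conformallyFlatCurvature_mul_mul A h hh, hR]
  obtain ⟨u, d, hu⟩ := hh.exists_conjStarAlgAut_eq_diagonal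
  rw [← trace_conjStarAlgAut u A, ← trace_conjStarAlgAut u h, ← trace_conjStarAlgAut u (A * h),
    ← trace_conjStarAlgAut u (A * (h * h)), ← trace_conjStarAlgAut u (h * h),
    ← sum_sq_conjStarAlgAut u A, ← sum_sq_conjStarAlgAut u h]
  simp only [map_mul, hu]
  simpa using chenWu_diagonal_matrix (by simpa using hn) (conjStarAlgAut ℝ _ u A) d

open Finset in
/-- Chen–Wu inequality (algebraic form, locally conformally flat case): for `n ≥ 3`,
a symmetric `n×n` matrix `A` with positive trace `R`, and the curvature tensor given by the
Kulkarni–Nomizu product of the Schouten tensor with the metric (identity matrix), one has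
`R · Rm_{ikjl}h_{ij}h_{kl} ≤ |A|²|h|²` for every symmetric `n×n` matrix `h`. -/
theorem chen_wu (n : ℕ) (hn : 3 ≤ n)
    (A h : Matrix (Fin n) (Fin n) ℝ)
    (hA : A.IsSymm) (hh : h.IsSymm)
    (R : ℝ) (hR : R = A.trace) (hRpos : 0 < R)
    (δ : Fin n → Fin n → ℝ) (hδ : ∀ i j, δ i j = if i = j then 1 else 0)
    (Rm : Fin n → Fin n → Fin n → Fin n → ℝ)
    (hRm : ∀ i k j l, Rm i k j l =
      (1 / ((n : ℝ) - 2)) *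
        (A i j * δ k l + A k l * δ i j - A i l * δ k j - A k j * δ i l)
      - (R / (((n : ℝ) - 1) * ((n : ℝ) - 2))) * (δ i j * δ k l - δ i l * δ k j)) :
    R * (∑ i, ∑ j, ∑ k, ∑ l, Rm i k j l * h i j * h k l) ≤
      (∑ i, ∑ j, (A i j) ^ 2) * (∑ i, ∑ j, (h i j) ^ 2) :=
  chen_wu_general n hn A h hh R hR δ hδ Rm hRm
end
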